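/- arXiv:2409.06027 — 4 statements merged into one kernel-verified Lean document; each statement's English description precedes it below -/
import Mathlib

section
/- Let P be a group, N a normal subgroup of P and M a subgroup of P such that N ∩ M = {1} and P = N·M (every element of P is a product of an element of N and an element of M). Suppose P acts on a set X, and let x ∈ X be a point whose P-orbit is finite. Set P_x = Stab_P(x), N_x = Stab_N(x) = N ∩ P_x, and M(x) = { m ∈ M : n·m ∈ P_x for some n ∈ N } (the image of P_x under the projection P → M determined by the decomposition P = N⋊M; it is a subgroup of M). Then all three indices below are finite and [P : P_x] = [N : N_x] · [M : M(x)]. -/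
/-!
The subgroup `N ⊔ P_x = N * P_x` lies between `P_x` and `P`, and `M(x) = N P_x ∩ M`.
Every left coset of `P_x` inside `N P_x` meets `N`, so `[N P_x : P_x] = [N : N_x]`; every left
coset of `N P_x` in `P = M N` meets `M`, so `[P : N P_x] = [M : M(x)]`. Multiplicativity of the
index in the tower `P_x ≤ N P_x ≤ P` gives the formula, and `[P : P_x] = |P x|` is finite.
-/

open scoped Pointwise

namespace Subgroup

variable {G : Type*} [Group G]

theorem mem_normal_sup_iff_exists_mul_mem {N H : Subgroup G} [N.Normal] {g : G} :
    g ∈ N ⊔ H ↔ ∃ n ∈ N, n * g ∈ H := by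
  rw [mem_sup_of_normal_left]
  constructor
  · rintro ⟨n, hn, h, hh, rfl⟩
    exact ⟨n⁻¹, N.inv_mem hn, by simpa using hh⟩
  · rintro ⟨n, hn, hng⟩
    exact ⟨n⁻¹, N.inv_mem hn, n * g, hng, by group⟩

theorem relIndex_eq_of_le_of_subset_mul {S T U : Subgroup G} (hTU : T ≤ U)
    (hU : (U : Set G) ⊆ (T : Set G) * (S : Set G)) : S.relIndex U = S.relIndex T := by
  have hsurj : Function.Surjective (quotientSubgroupOfEmbeddingOfLE S hTU) := by
    intro q
    induction q using QuotientGroup.induction_on with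
    | H u =>
      obtain ⟨t, ht, s, hs, hts⟩ := hU u.2
      refine ⟨QuotientGroup.mk ⟨t, ht⟩, ?_⟩
      rw [quotientSubgroupOfEmbeddingOfLE_apply_mk, QuotientGroup.eq]
      simpa [mem_subgroupOf, ← hts] using hs
  exact (Nat.card_congr (Equiv.ofBijective _
    ⟨(quotientSubgroupOfEmbeddingOfLE S hTU).injective, hsurj⟩)).symm

theorem index_eq_relIndex_of_normal_le {N M K : Subgroup G} [N.Normal] (hNK : N ≤ K)
    (hNM : ∀ g : G, ∃ n ∈ N, ∃ m ∈ M, g = n * m) : K.index = K.relIndex M := by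
  rw [← relIndex_top_right]
  refine relIndex_eq_of_le_of_subset_mul le_top fun g _ => ?_
  obtain ⟨n, hn, m, hm, rfl⟩ := hNM g
  exact ⟨m, hm, m⁻¹ * n * m, hNK (Normal.conj_mem' ‹_› n hn m), by group⟩

end Subgroup

open Subgroup MulAction in
theorem stmt_0_general {P : Type*} [Group P] (N M : Subgroup P) [N.Normal]
    (hP : ∀ g : P, ∃ n ∈ N, ∃ m ∈ M, g = n * m)
    {X : Type*} [MulAction P X] (x : X) (hx : (MulAction.orbit P x).Finite) :
    ∃ Mx : Subgroup P,
      (Mx : Set P) = {m : P | m ∈ M ∧ ∃ n ∈ N, n * m ∈ MulAction.stabilizer P x} ∧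
      (MulAction.stabilizer P x).index ≠ 0 ∧
      (MulAction.stabilizer P x).relIndex N ≠ 0 ∧
      Mx.relIndex M ≠ 0 ∧
      (MulAction.stabilizer P x).index =
        (MulAction.stabilizer P x).relIndex N * Mx.relIndex M := by
  set S := stabilizer P x
  refine ⟨(N ⊔ S) ⊓ M, ?_, ?_⟩
  · ext g
    simp only [coe_inf, Set.mem_inter_iff, SetLike.mem_coe, mem_normal_sup_iff_exists_mul_mem]
    exact and_comm
  have hindex : S.index = S.relIndex N * ((N ⊔ S) ⊓ M).relIndex M := by
    rw [← relIndex_mul_index (le_sup_right : S ≤ N ⊔ S),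
      relIndex_eq_of_le_of_subset_mul le_sup_left (normal_mul N S).le,
      index_eq_relIndex_of_normal_le le_sup_left hP, inf_relIndex_right]
  have hfinite : S.index ≠ 0 := by
    rw [index_stabilizer]
    exact ((Set.ncard_pos hx).2 ⟨x, mem_orbit_self x⟩).ne'
  exact ⟨hfinite, left_ne_zero_of_mul (hindex ▸ hfinite),
    right_ne_zero_of_mul (hindex ▸ hfinite), hindex⟩

/-- Let `P` be a group, `N` a normal subgroup and `M` a subgroup with
`N ∩ M = {1}` and `P = N·M`.  Suppose `P` acts on `X` and `x ∈ X` has finite `P`-orbit.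
Let `P_x` be the stabilizer of `x` in `P`, `N_x = N ∩ P_x`, and let `M(x)` be the subgroup
of `M` consisting of those `m ∈ M` such that `n·m ∈ P_x` for some `n ∈ N`.
Then all three indices are finite and `[P : P_x] = [N : N_x] · [M : M(x)]`. -/
theorem stmt_0 {P : Type*} [Group P] (N M : Subgroup P) [N.Normal]
    (hNM : N ⊓ M = ⊥) (hP : ∀ g : P, ∃ n ∈ N, ∃ m ∈ M, g = n * m)
    {X : Type*} [MulAction P X] (x : X) (hx : (MulAction.orbit P x).Finite) :
    ∃ Mx : Subgroup P,
      (Mx : Set P) = {m : P | m ∈ M ∧ ∃ n ∈ N, n * m ∈ MulAction.stabilizer P x} ∧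
      (MulAction.stabilizer P x).index ≠ 0 ∧
      (MulAction.stabilizer P x).relIndex N ≠ 0 ∧
      Mx.relIndex M ≠ 0 ∧
      (MulAction.stabilizer P x).index =
        (MulAction.stabilizer P x).relIndex N * Mx.relIndex M :=
  stmt_0_general N M hP x hx
end

section
/- Let p be a prime and let H be a subgroup of GL₄(ℤ_p) such that every g ∈ H satisfies g₃₁ ∈ pℤ_p and g₃₂·g₄₁ ∈ pℤ_p (in 2×2 block notation g = [[A,B],[C,D]], this says C₁₁ ∈ pℤ_p and C₁₂·C₂₁ ∈ pℤ_p). Then at least one of the following three alternatives holds: (a) for all g ∈ H, the entries g₂₁, g₃₁, g₄₁ lie in pℤ_p; or (b) for all g ∈ H, the entries g₃₁, g₃₂, g₃₄ lie in pℤ_p; or (c) for all g ∈ H, the entries g₃₁, g₃₂, g₄₁, g₄₂ lie in pℤ_p. -/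
/-!
Reduce modulo `p`: divisibility by `p` becomes vanishing in `𝔽_p`, and the argument below works
for a subgroup of `GL₄` over any domain (indices 1-based, as in the statement).

Since `g₃₁ = 0` for every `g` in the group, the `(3,1)` entry of a product `gh` is
`g₃₂ h₂₁ + g₃₄ h₄₁`: the row vectors `(g₃₂, g₃₄)` are orthogonal to the column vectors `(h₂₁, h₄₁)`.
Alternatives (a) and (b) say that every `g` stabilises the line spanned by `e₁`, resp. the dual
line spanned by `e₃*`; these stabilisers are subgroups, so if each `g` lies in one of them, the
whole group lies in one of them. Otherwise some `g` lies in neither, and then orthogonality of its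
own row and column vectors together with `g₃₂ g₄₁ = 0` forces `g₃₂ = g₄₁ = 0 ≠ g₂₁, g₃₄`. Pairing `g` with
every `h` then kills `h₃₂`, `h₄₁`, and finally `h₄₂` via `(hg)₄₁ = h₄₂ g₂₁`.
-/

open scoped MatrixGroups

namespace Matrix

variable {n R : Type*} [Fintype n] [CommRing R]

lemma mul_apply_of_col_eq_zero (A B : Matrix n n R) {i : n} (hB : ∀ k ≠ i, B k i = 0) (k : n) :
    (A * B) k i = A k i * B i i :=
  (mul_apply).trans <|
    Finset.sum_eq_single i (fun j _ hj => by rw [hB j hj, mul_zero]) (by simp)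

lemma mul_apply_of_row_eq_zero (A B : Matrix n n R) {i : n} (hA : ∀ k ≠ i, A i k = 0) (k : n) :
    (A * B) i k = A i i * B i k :=
  (mul_apply).trans <|
    Finset.sum_eq_single i (fun j _ hj => by rw [hA j hj, zero_mul]) (by simp)

namespace GeneralLinearGroup

variable [DecidableEq n]

/-- The stabiliser of the line `R • Pi.single i 1` under the left action on column vectors. -/
def colLineStabilizer (i : n) : Subgroup (GL n R) where
  carrier := {g | ∀ k ≠ i, g k i = 0}
  one_mem' k hk := one_apply_ne hk
  mul_mem' {a b} ha hb k hk := by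
    rw [Units.val_mul, mul_apply_of_col_eq_zero _ _ hb, ha k hk, zero_mul]
  inv_mem' {g} hg k hk := by
    have hinv (k : n) : g⁻¹ k i * g i i = (1 : Matrix n n R) k i := by
      rw [← mul_apply_of_col_eq_zero _ _ hg, ← Units.val_mul, inv_mul_cancel, Units.val_one]
    have hki := hinv k
    have hii := hinv i
    rw [one_apply_ne hk] at hki
    rw [one_apply_eq] at hii
    linear_combination g⁻¹ i i * hki - g⁻¹ k i * hii

/-- The stabiliser of the line `R • Pi.single i 1` under the right action on row vectors. -/
def rowLineStabilizer (i : n) : Subgroup (GL n R) where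
  carrier := {g | ∀ k ≠ i, g i k = 0}
  one_mem' k hk := one_apply_ne hk.symm
  mul_mem' {a b} ha hb k hk := by
    rw [Units.val_mul, mul_apply_of_row_eq_zero _ _ ha, hb k hk, mul_zero]
  inv_mem' {g} hg k hk := by
    have hinv (k : n) : g i i * g⁻¹ i k = (1 : Matrix n n R) i k := by
      rw [← mul_apply_of_row_eq_zero _ _ hg, ← Units.val_mul, mul_inv_cancel, Units.val_one]
    have hik := hinv k
    have hii := hinv i
    rw [one_apply_ne hk.symm] at hik
    rw [one_apply_eq] at hii
    linear_combination g⁻¹ i i * hik - g⁻¹ i k * hii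

end GeneralLinearGroup

end Matrix

open Matrix Matrix.GeneralLinearGroup

lemma Subgroup.le_or_le_of_forall_mem_or {G : Type*} [Group G] {K A B : Subgroup G}
    (h : ∀ g ∈ K, g ∈ A ∨ g ∈ B) : K ≤ A ∨ K ≤ B := by
  by_contra! ⟨hA, hB⟩
  obtain ⟨a, haK, haA⟩ := SetLike.not_le_iff_exists.1 hA
  obtain ⟨b, hbK, hbB⟩ := SetLike.not_le_iff_exists.1 hB
  have haB : a ∈ B := (h a haK).resolve_left haA
  have hbA : b ∈ A := (h b hbK).resolve_right hbB
  rcases h (a * b) (mul_mem haK hbK) with hab | hab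
  · exact haA (by simpa using mul_mem hab (inv_mem hbA))
  · exact hbB (by simpa using mul_mem (inv_mem haB) hab)

section GL4

variable {R : Type*} [CommRing R]

lemma mem_colLineStabilizer_zero_iff {g : GL (Fin 4) R} :
    g ∈ colLineStabilizer 0 ↔ g 1 0 = 0 ∧ g 2 0 = 0 ∧ g 3 0 = 0 := by
  simp [colLineStabilizer, Fin.forall_fin_succ]

lemma mem_rowLineStabilizer_two_iff {g : GL (Fin 4) R} :
    g ∈ rowLineStabilizer 2 ↔ g 2 0 = 0 ∧ g 2 1 = 0 ∧ g 2 3 = 0 := by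
  simp [rowLineStabilizer, Fin.forall_fin_succ]

lemma mul_apply_two_zero_of_apply_two_zero {g h : GL (Fin 4) R} (hg : g 2 0 = 0)
    (hh : h 2 0 = 0) : (g * h) 2 0 = g 2 1 * h 1 0 + g 2 3 * h 3 0 := by
  rw [Units.val_mul, mul_apply, Fin.sum_univ_four, hg, hh]
  ring

variable [IsDomain R]

theorem subgroup_GL4_trichotomy (G : Subgroup (GL (Fin 4) R)) (h20 : ∀ g ∈ G, g 2 0 = 0)
    (h21_30 : ∀ g ∈ G, g 2 1 * g 3 0 = 0) :
    (∀ g ∈ G, g 1 0 = 0 ∧ g 2 0 = 0 ∧ g 3 0 = 0) ∨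
    (∀ g ∈ G, g 2 0 = 0 ∧ g 2 1 = 0 ∧ g 2 3 = 0) ∨
    (∀ g ∈ G, g 2 0 = 0 ∧ g 2 1 = 0 ∧ g 3 0 = 0 ∧ g 3 1 = 0) := by
  have pairing : ∀ g ∈ G, ∀ h ∈ G, g 2 1 * h 1 0 + g 2 3 * h 3 0 = 0 := fun g hg h hh => by
    rw [← mul_apply_two_zero_of_apply_two_zero (h20 g hg) (h20 h hh)]
    exact h20 _ (mul_mem hg hh)
  by_cases hcover : ∀ g ∈ G, g ∈ colLineStabilizer 0 ∨ g ∈ rowLineStabilizer 2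
  · rcases Subgroup.le_or_le_of_forall_mem_or hcover with hcol | hrow
    · exact .inl fun g hg => mem_colLineStabilizer_zero_iff.1 (hcol hg)
    · exact .inr <| .inl fun g hg => mem_rowLineStabilizer_two_iff.1 (hrow hg)
  push Not at hcover
  obtain ⟨g, hg, hgcol, hgrow⟩ := hcover
  rw [mem_colLineStabilizer_zero_iff, h20 g hg] at hgcol
  rw [mem_rowLineStabilizer_two_iff, h20 g hg] at hgrow
  have hgg := pairing g hg g hg
  obtain ⟨hg21, hg30, hg10, hg23⟩ : g 2 1 = 0 ∧ g 3 0 = 0 ∧ g 1 0 ≠ 0 ∧ g 2 3 ≠ 0 := by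
    rcases mul_eq_zero.1 (h21_30 g hg) with h21 | h30
    · have h23 : g 2 3 ≠ 0 := by tauto
      have h30 : g 3 0 = 0 := by
        rw [h21, zero_mul, zero_add] at hgg
        exact (mul_eq_zero.1 hgg).resolve_left h23
      exact ⟨h21, h30, by tauto, h23⟩
    · have h10 : g 1 0 ≠ 0 := by tauto
      have h21 : g 2 1 = 0 := by
        rw [h30, mul_zero, add_zero] at hgg
        exact (mul_eq_zero.1 hgg).resolve_right h10
      exact ⟨h21, h30, h10, by tauto⟩
  have all30 : ∀ h ∈ G, h 3 0 = 0 := fun h hh => by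
    have := pairing g hg h hh
    rw [hg21, zero_mul, zero_add] at this
    exact (mul_eq_zero.1 this).resolve_left hg23
  refine .inr <| .inr fun h hh => ⟨h20 h hh, ?_, all30 h hh, ?_⟩
  · have := pairing h hh g hg
    rw [hg30, mul_zero, add_zero] at this
    exact (mul_eq_zero.1 this).resolve_right hg10
  · have := all30 _ (mul_mem hh hg)
    rw [Units.val_mul, mul_apply, Fin.sum_univ_four, all30 h hh, h20 g hg, hg30] at this
    simp only [zero_mul, mul_zero, zero_add, add_zero] at this
    exact (mul_eq_zero.1 this).resolve_right hg10

end GL4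

lemma PadicInt.natCast_dvd_iff_toZMod_eq_zero {p : ℕ} [Fact p.Prime] (x : ℤ_[p]) :
    (p : ℤ_[p]) ∣ x ↔ PadicInt.toZMod x = 0 := by
  rw [← Ideal.mem_span_singleton, ← PadicInt.maximalIdeal_eq_span_p, ← PadicInt.ker_toZMod,
    RingHom.mem_ker]

/-- Let `p` be a prime and `H ≤ GL₄(ℤ_p)` a subgroup such that every
`g ∈ H` satisfies `g₃₁ ∈ pℤ_p` and `g₃₂·g₄₁ ∈ pℤ_p`.  Then at least one of:
(a) for all `g ∈ H`, `g₂₁, g₃₁, g₄₁ ∈ pℤ_p`; or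
(b) for all `g ∈ H`, `g₃₁, g₃₂, g₃₄ ∈ pℤ_p`; or
(c) for all `g ∈ H`, `g₃₁, g₃₂, g₄₁, g₄₂ ∈ pℤ_p`.
(Indices are 1-based in the informal statement; here `(i,j)` is entry `g (i-1) (j-1)`.) -/
theorem stmt_2 (p : ℕ) [Fact p.Prime] (H : Subgroup (GL (Fin 4) ℤ_[p]))
    (hH : ∀ g ∈ H, (p : ℤ_[p]) ∣ (g : Matrix (Fin 4) (Fin 4) ℤ_[p]) 2 0 ∧
      (p : ℤ_[p]) ∣ ((g : Matrix (Fin 4) (Fin 4) ℤ_[p]) 2 1 *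
        (g : Matrix (Fin 4) (Fin 4) ℤ_[p]) 3 0)) :
    (∀ g ∈ H, (p : ℤ_[p]) ∣ (g : Matrix (Fin 4) (Fin 4) ℤ_[p]) 1 0 ∧
        (p : ℤ_[p]) ∣ (g : Matrix (Fin 4) (Fin 4) ℤ_[p]) 2 0 ∧
        (p : ℤ_[p]) ∣ (g : Matrix (Fin 4) (Fin 4) ℤ_[p]) 3 0) ∨
    (∀ g ∈ H, (p : ℤ_[p]) ∣ (g : Matrix (Fin 4) (Fin 4) ℤ_[p]) 2 0 ∧
        (p : ℤ_[p]) ∣ (g : Matrix (Fin 4) (Fin 4) ℤ_[p]) 2 1 ∧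
        (p : ℤ_[p]) ∣ (g : Matrix (Fin 4) (Fin 4) ℤ_[p]) 2 3) ∨
    (∀ g ∈ H, (p : ℤ_[p]) ∣ (g : Matrix (Fin 4) (Fin 4) ℤ_[p]) 2 0 ∧
        (p : ℤ_[p]) ∣ (g : Matrix (Fin 4) (Fin 4) ℤ_[p]) 2 1 ∧
        (p : ℤ_[p]) ∣ (g : Matrix (Fin 4) (Fin 4) ℤ_[p]) 3 0 ∧
        (p : ℤ_[p]) ∣ (g : Matrix (Fin 4) (Fin 4) ℤ_[p]) 3 1) := by
  simp only [PadicInt.natCast_dvd_iff_toZMod_eq_zero, map_mul] at hH ⊢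
  have key := subgroup_GL4_trichotomy (H.map (map PadicInt.toZMod))
  simp only [Subgroup.mem_map, forall_exists_index, and_imp, forall_apply_eq_imp_iff₂,
    GeneralLinearGroup.map_apply] at key
  exact key (fun g hg => (hH g hg).1) (fun g hg => (hH g hg).2)
end

section
/- Let p be a prime. Let 𝒦_p = { g ∈ GSp₄(ℚ_p) : g₁₃ ∈ p⁻¹ℤ_p; g₂₁, g₃₁, g₃₂, g₃₄, g₄₁ ∈ pℤ_p; and all remaining entries of g lie in ℤ_p } (the first paramodular subgroup), and let 𝒩(𝒦_p) = { n ∈ GSp₄(ℚ_p) : n·𝒦_p·n⁻¹ = 𝒦_p } be its normalizer in GSp₄(ℚ_p). Let B(ℚ_p) = { g ∈ GSp₄(ℚ_p) : g₂₁ = g₃₁ = g₄₁ = g₃₂ = g₄₂ = g₃₄ = 0 } be the Borel subgroup. Then GSp₄(ℚ_p) = B(ℚ_p)·𝒩(𝒦_p), i.e. every g ∈ GSp₄(ℚ_p) can be written as g = b·n with b ∈ B(ℚ_p) and n ∈ 𝒩(𝒦_p). -/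
open Matrix

/-- The standard symplectic similitude matrix `J`. -/
noncomputable def J4 (p : ℕ) [Fact p.Prime] : Matrix (Fin 4) (Fin 4) ℚ_[p] :=
  !![0, 0, 1, 0; 0, 0, 0, 1; -1, 0, 0, 0; 0, -1, 0, 0]

/-- `GSp₄(ℚ_p)`: invertible 4×4 matrices `g` with `gᵀ·J·g = μ·J` for some `μ ≠ 0`. -/
def GSp4 (p : ℕ) [Fact p.Prime] : Set (Matrix (Fin 4) (Fin 4) ℚ_[p]) :=
  {g | g.det ≠ 0 ∧ ∃ μ : ℚ_[p], μ ≠ 0 ∧ gᵀ * J4 p * g = μ • J4 p}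

/-- The first paramodular subgroup `𝒦_p ⊂ GSp₄(ℚ_p)`:
`g₁₃ ∈ p⁻¹ℤ_p`; `g₂₁, g₃₁, g₃₂, g₃₄, g₄₁ ∈ pℤ_p`; all remaining entries in `ℤ_p`. -/
def Kpara (p : ℕ) [Fact p.Prime] : Set (Matrix (Fin 4) (Fin 4) ℚ_[p]) :=
  {g | g ∈ GSp4 p ∧
    ‖g 0 0‖ ≤ 1 ∧ ‖g 0 1‖ ≤ 1 ∧ ‖g 0 2‖ ≤ (p : ℝ) ∧ ‖g 0 3‖ ≤ 1 ∧
    ‖g 1 0‖ ≤ (p : ℝ)⁻¹ ∧ ‖g 1 1‖ ≤ 1 ∧ ‖g 1 2‖ ≤ 1 ∧ ‖g 1 3‖ ≤ 1 ∧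
    ‖g 2 0‖ ≤ (p : ℝ)⁻¹ ∧ ‖g 2 1‖ ≤ (p : ℝ)⁻¹ ∧ ‖g 2 2‖ ≤ 1 ∧ ‖g 2 3‖ ≤ (p : ℝ)⁻¹ ∧
    ‖g 3 0‖ ≤ (p : ℝ)⁻¹ ∧ ‖g 3 1‖ ≤ 1 ∧ ‖g 3 2‖ ≤ 1 ∧ ‖g 3 3‖ ≤ 1}

/-- The normalizer of `𝒦_p` in `GSp₄(ℚ_p)`. -/
noncomputable def KparaNormalizer (p : ℕ) [Fact p.Prime] :
    Set (Matrix (Fin 4) (Fin 4) ℚ_[p]) :=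
  {n | n ∈ GSp4 p ∧ (fun k => n * k * n⁻¹) '' Kpara p = Kpara p}

/-- The Borel subgroup `B(ℚ_p)` of `GSp₄(ℚ_p)`: entries at positions
(2,1), (3,1), (4,1), (3,2), (4,2), (3,4) vanish. -/
def BorelQp (p : ℕ) [Fact p.Prime] : Set (Matrix (Fin 4) (Fin 4) ℚ_[p]) :=
  {g | g ∈ GSp4 p ∧ g 1 0 = 0 ∧ g 2 0 = 0 ∧ g 3 0 = 0 ∧ g 2 1 = 0 ∧ g 3 1 = 0 ∧ g 2 3 = 0}

/-!
Right multiplication by `𝒩(𝒦_p)` performs column operations on `g`; as `𝒩(𝒦_p)` is a group, it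
suffices to bring `g` into `B(ℚ_p)` by such operations. Because `ℚ_p` is ultrametric and
`e i j ≤ e i k + e k j` for `e = paramodularExponent`, the matrices with `‖x i j‖ ≤ p ^ (-e i j)`
are closed under products; `𝒦_p` is their intersection with `GSp₄(ℚ_p)`, so every element of
`𝒦_p` whose inverse lies in `𝒦_p` normalizes `𝒦_p`. So does the Atkin–Lehner element: its square
is the scalar `p`, and conjugation by it permutes the entries up to powers of `p` that respect `e`.

Weight the third row `(a, b, c, d)` of `g` as `(‖a‖, ‖b‖, ‖c‖ / p, ‖d‖)`. If `c` carries the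
largest weight, unipotent elements of `𝒦_p` clear `a`, `b` and `d`; if `a` does, a Weyl element
of `𝒦_p` exchanges `a` and `c`; if `b` or `d` does, the Atkin–Lehner element moves it to the
first or third place, where, because `‖ℚ_p^×‖ = p ^ ℤ`, it now dominates. Once the third row is
`(0, 0, c, 0)`, an element of `𝒦_p` mixing the second and fourth columns kills the `(4, 2)` entry,
and the relation `g J gᵀ = μ J` forces the `(2, 1)` and `(4, 1)` entries to vanish.
-/

theorem Matrix.norm_mul_apply_le_of_forall_norm_le {l m n R : Type*} [Fintype m] [Nonempty m]
    [NormedRing R] [IsUltrametricDist R] {r : l → m → ℝ} {s : m → n → ℝ} {t : l → n → ℝ}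
    (hrst : ∀ i k j, r i k * s k j ≤ t i j) {x : Matrix l m R} {y : Matrix m n R}
    (hx : ∀ i k, ‖x i k‖ ≤ r i k) (hy : ∀ k j, ‖y k j‖ ≤ s k j) (i : l) (j : n) :
    ‖(x * y) i j‖ ≤ t i j :=
  IsUltrametricDist.norm_sum_le_of_forall_le_of_nonempty Finset.univ_nonempty fun k _ =>
    (norm_mul_le _ _).trans <|
      (mul_le_mul (hx i k) (hy k j) (norm_nonneg _) ((norm_nonneg _).trans (hx i k))).trans
        (hrst i k j)

theorem Matrix.vec_eta_four {α : Type*} (v : Fin 4 → α) : v = ![v 0, v 1, v 2, v 3] := by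
  ext i; fin_cases i <;> rfl

namespace GSp4

variable {p : ℕ} [Fact p.Prime]

theorem J4_mul_J4 : J4 p * J4 p = -1 := by
  ext i j
  fin_cases i <;> fin_cases j <;> simp [J4, Matrix.mul_apply, Fin.sum_univ_four]

theorem mul_J4_mul_transpose {x : Matrix (Fin 4) (Fin 4) ℚ_[p]} {μ : ℚ_[p]} (hμ : μ ≠ 0)
    (hJ : xᵀ * J4 p * x = μ • J4 p) : x * J4 p * xᵀ = μ • J4 p := by
  have hleft : (-μ)⁻¹ • (J4 p * xᵀ * J4 p) * x = 1 := by
    rw [Matrix.smul_mul, Matrix.mul_assoc, Matrix.mul_assoc, ← Matrix.mul_assoc xᵀ, hJ,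
      Matrix.mul_smul, J4_mul_J4, smul_neg, ← neg_smul, smul_smul,
      inv_mul_cancel₀ (neg_ne_zero.mpr hμ), one_smul]
  have hright : x * (J4 p * xᵀ * J4 p) = -μ • 1 := by
    have h := congrArg ((-μ) • ·) (mul_eq_one_comm.mp hleft)
    simpa [Matrix.mul_smul, smul_smul, hμ] using h
  calc x * J4 p * xᵀ = x * (J4 p * xᵀ * J4 p) * -J4 p := by
        simp only [Matrix.mul_neg, Matrix.mul_assoc, J4_mul_J4, Matrix.mul_one, neg_neg]
    _ = μ • J4 p := by rw [hright]; simp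

theorem one_mem : (1 : Matrix (Fin 4) (Fin 4) ℚ_[p]) ∈ GSp4 p :=
  ⟨by simp, 1, one_ne_zero, by simp⟩

theorem mul_mem {x y : Matrix (Fin 4) (Fin 4) ℚ_[p]} (hx : x ∈ GSp4 p) (hy : y ∈ GSp4 p) :
    x * y ∈ GSp4 p := by
  obtain ⟨hdx, μ, hμ, hJx⟩ := hx
  obtain ⟨hdy, ν, hν, hJy⟩ := hy
  refine ⟨by simp [Matrix.det_mul, hdx, hdy], μ * ν, mul_ne_zero hμ hν, ?_⟩
  calc (x * y)ᵀ * J4 p * (x * y) = yᵀ * (xᵀ * J4 p * x) * y := by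
        simp only [Matrix.transpose_mul, Matrix.mul_assoc]
    _ = (μ * ν) • J4 p := by
        rw [hJx, Matrix.mul_smul, Matrix.smul_mul, hJy, smul_smul]

theorem inv_mem {x : Matrix (Fin 4) (Fin 4) ℚ_[p]} (hx : x ∈ GSp4 p) : x⁻¹ ∈ GSp4 p := by
  obtain ⟨hd, μ, hμ, hJx⟩ := hx
  have hx1 : x * x⁻¹ = 1 := x.mul_nonsing_inv (isUnit_iff_ne_zero.mpr hd)
  refine ⟨by simpa [Matrix.det_nonsing_inv] using hd, μ⁻¹, inv_ne_zero hμ, ?_⟩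
  calc (x⁻¹)ᵀ * J4 p * x⁻¹ = μ⁻¹ • ((x⁻¹)ᵀ * (μ • J4 p) * x⁻¹) := by simp [smul_smul, hμ]
    _ = μ⁻¹ • ((x * x⁻¹)ᵀ * J4 p * (x * x⁻¹)) := by
        rw [← hJx, Matrix.transpose_mul]; simp only [Matrix.mul_assoc]
    _ = μ⁻¹ • J4 p := by simp [hx1]

theorem of_mul_eq_one {x y : Matrix (Fin 4) (Fin 4) ℚ_[p]} {μ : ℚ_[p]} (hμ : μ ≠ 0)
    (hJ : xᵀ * J4 p * x = μ • J4 p) (hxy : x * y = 1) : x ∈ GSp4 p :=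
  ⟨left_ne_zero_of_mul_eq_one (by rw [← Matrix.det_mul, hxy, Matrix.det_one]), μ, hμ, hJ⟩

end GSp4

def paramodularExponent : Matrix (Fin 4) (Fin 4) ℤ :=
  !![0, 0, -1, 0; 1, 0, 0, 0; 1, 1, 0, 1; 1, 0, 0, 0]

def paramodularOrder (p : ℕ) [Fact p.Prime] : Set (Matrix (Fin 4) (Fin 4) ℚ_[p]) :=
  {x | ∀ i j, ‖x i j‖ ≤ (p : ℝ) ^ (-paramodularExponent i j)}

namespace paramodularOrder

variable {p : ℕ} [Fact p.Prime]

theorem mul_mem {x y : Matrix (Fin 4) (Fin 4) ℚ_[p]} (hx : x ∈ paramodularOrder p)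
    (hy : y ∈ paramodularOrder p) : x * y ∈ paramodularOrder p := by
  have hp : (1 : ℝ) ≤ p := by exact_mod_cast (Fact.out : p.Prime).one_lt.le
  refine Matrix.norm_mul_apply_le_of_forall_norm_le (fun i k j => ?_) hx hy
  rw [← zpow_add₀ (by positivity)]
  exact zpow_le_zpow_right₀ hp (by revert i k j; decide)

end paramodularOrder

theorem mem_Kpara_iff {p : ℕ} [Fact p.Prime] {x : Matrix (Fin 4) (Fin 4) ℚ_[p]} :
    x ∈ Kpara p ↔ x ∈ GSp4 p ∧ x ∈ paramodularOrder p := by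
  simp only [Kpara, paramodularOrder, Set.mem_ofPred_eq, Fin.forall_fin_succ]
  simp [paramodularExponent, and_assoc]

theorem Kpara.mul_mem {p : ℕ} [Fact p.Prime] {x y : Matrix (Fin 4) (Fin 4) ℚ_[p]}
    (hx : x ∈ Kpara p) (hy : y ∈ Kpara p) : x * y ∈ Kpara p := by
  rw [mem_Kpara_iff] at *
  exact ⟨GSp4.mul_mem hx.1 hy.1, paramodularOrder.mul_mem hx.2 hy.2⟩

namespace KparaNormalizer

variable {p : ℕ} [Fact p.Prime] {n : Matrix (Fin 4) (Fin 4) ℚ_[p]}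

theorem of_conj (hn : n ∈ GSp4 p) (h₁ : ∀ k ∈ Kpara p, n * k * n⁻¹ ∈ Kpara p)
    (h₂ : ∀ k ∈ Kpara p, n⁻¹ * k * n ∈ Kpara p) : n ∈ KparaNormalizer p := by
  refine ⟨hn, subset_antisymm (Set.image_subset_iff.mpr h₁) fun k hk => ⟨_, h₂ k hk, ?_⟩⟩
  have hu : IsUnit n.det := isUnit_iff_ne_zero.mpr hn.1
  simp only [← Matrix.mul_assoc, Matrix.mul_nonsing_inv _ hu, Matrix.one_mul,
    Matrix.mul_nonsing_inv_cancel_right _ _ hu]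

theorem conj_mem (hn : n ∈ KparaNormalizer p) {k : Matrix (Fin 4) (Fin 4) ℚ_[p]}
    (hk : k ∈ Kpara p) : n * k * n⁻¹ ∈ Kpara p :=
  hn.2.subset ⟨k, hk, rfl⟩

theorem inv_conj_mem (hn : n ∈ KparaNormalizer p) {k : Matrix (Fin 4) (Fin 4) ℚ_[p]}
    (hk : k ∈ Kpara p) : n⁻¹ * k * n ∈ Kpara p := by
  obtain ⟨k', hk', rfl⟩ := hn.2.symm.subset hk
  have hu : IsUnit n.det := isUnit_iff_ne_zero.mpr hn.1.1
  simpa only [← Matrix.mul_assoc, Matrix.nonsing_inv_mul _ hu, Matrix.one_mul,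
    Matrix.nonsing_inv_mul_cancel_right _ _ hu] using hk'

theorem one_mem : (1 : Matrix (Fin 4) (Fin 4) ℚ_[p]) ∈ KparaNormalizer p :=
  of_conj GSp4.one_mem (by simp) (by simp)

theorem inv_mem (hn : n ∈ KparaNormalizer p) : n⁻¹ ∈ KparaNormalizer p := by
  have hu : IsUnit n.det := isUnit_iff_ne_zero.mpr hn.1.1
  refine of_conj (GSp4.inv_mem hn.1) (fun k hk => ?_) fun k hk => ?_
  · simpa [Matrix.nonsing_inv_nonsing_inv _ hu] using inv_conj_mem hn hk
  · simpa [Matrix.nonsing_inv_nonsing_inv _ hu] using conj_mem hn hk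

theorem mul_mem {m : Matrix (Fin 4) (Fin 4) ℚ_[p]} (hn : n ∈ KparaNormalizer p)
    (hm : m ∈ KparaNormalizer p) : n * m ∈ KparaNormalizer p := by
  refine of_conj (GSp4.mul_mem hn.1 hm.1) (fun k hk => ?_) fun k hk => ?_
  · simpa [Matrix.mul_inv_rev, Matrix.mul_assoc] using conj_mem hn (conj_mem hm hk)
  · simpa [Matrix.mul_inv_rev, Matrix.mul_assoc] using inv_conj_mem hm (inv_conj_mem hn hk)

theorem of_mul_eq_one {m : Matrix (Fin 4) (Fin 4) ℚ_[p]} {μ : ℚ_[p]} (hμ : μ ≠ 0)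
    (hJ : nᵀ * J4 p * n = μ • J4 p) (hnm : n * m = 1) (hn : n ∈ paramodularOrder p)
    (hm : m ∈ paramodularOrder p) : n ∈ KparaNormalizer p := by
  have hnG : n ∈ GSp4 p := GSp4.of_mul_eq_one hμ hJ hnm
  have hinv : n⁻¹ = m := Matrix.inv_eq_right_inv hnm
  have hnK : n ∈ Kpara p := mem_Kpara_iff.mpr ⟨hnG, hn⟩
  have hmK : m ∈ Kpara p := mem_Kpara_iff.mpr ⟨hinv ▸ GSp4.inv_mem hnG, hm⟩
  exact of_conj hnG (fun k hk => hinv ▸ Kpara.mul_mem (Kpara.mul_mem hnK hk) hmK)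
    fun k hk => hinv ▸ Kpara.mul_mem (Kpara.mul_mem hmK hk) hnK

end KparaNormalizer

noncomputable section ExplicitElements

variable {p : ℕ} [Fact p.Prime]

def unipotent10 (t : ℚ_[p]) : Matrix (Fin 4) (Fin 4) ℚ_[p] :=
  !![1, 0, 0, 0; t, 1, 0, 0; 0, 0, 1, -t; 0, 0, 0, 1]

def unipotent21 (t : ℚ_[p]) : Matrix (Fin 4) (Fin 4) ℚ_[p] :=
  !![1, 0, 0, 0; 0, 1, 0, 0; 0, t, 1, 0; t, 0, 0, 1]

def unipotent20 (t : ℚ_[p]) : Matrix (Fin 4) (Fin 4) ℚ_[p] :=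
  !![1, 0, 0, 0; 0, 1, 0, 0; t, 0, 1, 0; 0, 0, 0, 1]

def unipotent31 (t : ℚ_[p]) : Matrix (Fin 4) (Fin 4) ℚ_[p] :=
  !![1, 0, 0, 0; 0, 1, 0, 0; 0, 0, 1, 0; 0, t, 0, 1]

variable (p) in
def weyl02 : Matrix (Fin 4) (Fin 4) ℚ_[p] :=
  !![0, 0, (p : ℚ_[p])⁻¹, 0; 0, 1, 0, 0; -p, 0, 0, 0; 0, 0, 0, 1]

variable (p) in
def weyl13 : Matrix (Fin 4) (Fin 4) ℚ_[p] :=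
  !![1, 0, 0, 0; 0, 0, 0, 1; 0, 0, 1, 0; 0, -1, 0, 0]

theorem unipotent10_mem {t : ℚ_[p]} (ht : ‖t‖ ≤ (p : ℝ)⁻¹) :
    unipotent10 t ∈ KparaNormalizer p := by
  refine KparaNormalizer.of_mul_eq_one (m := unipotent10 (-t)) one_ne_zero ?_ ?_ ?_ ?_ <;>
    (first | ext i j | intro i j) <;> fin_cases i <;> fin_cases j <;>
    simp [unipotent10, J4, paramodularExponent, Matrix.mul_apply, Fin.sum_univ_four, ht]

theorem unipotent21_mem {t : ℚ_[p]} (ht : ‖t‖ ≤ (p : ℝ)⁻¹) :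
    unipotent21 t ∈ KparaNormalizer p := by
  refine KparaNormalizer.of_mul_eq_one (m := unipotent21 (-t)) one_ne_zero ?_ ?_ ?_ ?_ <;>
    (first | ext i j | intro i j) <;> fin_cases i <;> fin_cases j <;>
    simp [unipotent21, J4, paramodularExponent, Matrix.mul_apply, Fin.sum_univ_four, ht]

theorem unipotent20_mem {t : ℚ_[p]} (ht : ‖t‖ ≤ (p : ℝ)⁻¹) :
    unipotent20 t ∈ KparaNormalizer p := by
  refine KparaNormalizer.of_mul_eq_one (m := unipotent20 (-t)) one_ne_zero ?_ ?_ ?_ ?_ <;>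
    (first | ext i j | intro i j) <;> fin_cases i <;> fin_cases j <;>
    simp [unipotent20, J4, paramodularExponent, Matrix.mul_apply, Fin.sum_univ_four, ht]

theorem unipotent31_mem {t : ℚ_[p]} (ht : ‖t‖ ≤ 1) :
    unipotent31 t ∈ KparaNormalizer p := by
  refine KparaNormalizer.of_mul_eq_one (m := unipotent31 (-t)) one_ne_zero ?_ ?_ ?_ ?_ <;>
    (first | ext i j | intro i j) <;> fin_cases i <;> fin_cases j <;>
    simp [unipotent31, J4, paramodularExponent, Matrix.mul_apply, Fin.sum_univ_four, ht]

theorem weyl02_mem : weyl02 p ∈ KparaNormalizer p := by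
  have hp : (p : ℚ_[p]) ≠ 0 := Nat.cast_ne_zero.mpr (Fact.out : p.Prime).ne_zero
  refine KparaNormalizer.of_mul_eq_one
    (m := !![0, 0, -(p : ℚ_[p])⁻¹, 0; 0, 1, 0, 0; p, 0, 0, 0; 0, 0, 0, 1]) one_ne_zero
    ?_ ?_ ?_ ?_ <;>
    (first | ext i j | intro i j) <;> fin_cases i <;> fin_cases j <;>
    simp [weyl02, J4, paramodularExponent, Matrix.mul_apply, Fin.sum_univ_four, hp]

theorem weyl13_mem : weyl13 p ∈ KparaNormalizer p := by
  refine KparaNormalizer.of_mul_eq_one (m := (weyl13 p)ᵀ) one_ne_zero ?_ ?_ ?_ ?_ <;>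
    (first | ext i j | intro i j) <;> fin_cases i <;> fin_cases j <;>
    simp [weyl13, J4, paramodularExponent, Matrix.mul_apply, Fin.sum_univ_four]

variable (p) in
def atkinLehner : Matrix (Fin 4) (Fin 4) ℚ_[p] :=
  !![0, 1, 0, 0; p, 0, 0, 0; 0, 0, 0, p; 0, 0, 1, 0]

theorem atkinLehner_mul_self :
    atkinLehner p * atkinLehner p = (p : ℚ_[p]) • (1 : Matrix (Fin 4) (Fin 4) ℚ_[p]) := by
  ext i j
  fin_cases i <;> fin_cases j <;> simp [atkinLehner, Matrix.mul_apply, Fin.sum_univ_four]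

theorem atkinLehner_conj_apply (k : Matrix (Fin 4) (Fin 4) ℚ_[p]) (i j : Fin 4) :
    ((p : ℚ_[p])⁻¹ • (atkinLehner p * k * atkinLehner p) : Matrix (Fin 4) (Fin 4) ℚ_[p]) i j =
      (p : ℚ_[p]) ^ (![0, 1, 1, 0] i - ![0, 1, 1, 0] j : ℤ) *
        k (![1, 0, 3, 2] i) (![1, 0, 3, 2] j) := by
  have hp : (p : ℚ_[p]) ≠ 0 := Nat.cast_ne_zero.mpr (Fact.out : p.Prime).ne_zero
  fin_cases i <;> fin_cases j <;>
    simp [atkinLehner, Matrix.mul_apply, Matrix.vecMul, dotProduct, Fin.sum_univ_four, hp] <;>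
    field_simp

theorem atkinLehner_conj_mem {k : Matrix (Fin 4) (Fin 4) ℚ_[p]} (hk : k ∈ paramodularOrder p) :
    (p : ℚ_[p])⁻¹ • (atkinLehner p * k * atkinLehner p) ∈ paramodularOrder p := by
  have hp : (1 : ℝ) < p := by exact_mod_cast (Fact.out : p.Prime).one_lt
  intro i j
  rw [atkinLehner_conj_apply, norm_mul, Padic.norm_p_zpow]
  refine (mul_le_mul_of_nonneg_left (hk _ _) (by positivity)).trans ?_
  rw [← zpow_add₀ (by positivity)]
  exact zpow_le_zpow_right₀ hp.le (by revert i j; decide)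

theorem atkinLehner_mem : atkinLehner p ∈ KparaNormalizer p := by
  have hp : (p : ℚ_[p]) ≠ 0 := Nat.cast_ne_zero.mpr (Fact.out : p.Prime).ne_zero
  have hright : atkinLehner p * ((p : ℚ_[p])⁻¹ • atkinLehner p) = 1 := by
    rw [Matrix.mul_smul, atkinLehner_mul_self, smul_smul, inv_mul_cancel₀ hp, one_smul]
  have hinv : (atkinLehner p)⁻¹ = (p : ℚ_[p])⁻¹ • atkinLehner p := Matrix.inv_eq_right_inv hright
  have hG : atkinLehner p ∈ GSp4 p := GSp4.of_mul_eq_one (μ := p) hp (by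
    ext i j; fin_cases i <;> fin_cases j <;>
      simp [atkinLehner, J4, Matrix.mul_apply, Fin.sum_univ_four]) hright
  have hconj (k : Matrix (Fin 4) (Fin 4) ℚ_[p]) (hk : k ∈ Kpara p) :
      atkinLehner p * k * (atkinLehner p)⁻¹ ∈ Kpara p := by
    rw [mem_Kpara_iff] at hk ⊢
    refine ⟨GSp4.mul_mem (GSp4.mul_mem hG hk.1) (GSp4.inv_mem hG), ?_⟩
    simpa [hinv, Matrix.mul_smul] using atkinLehner_conj_mem hk.2
  refine KparaNormalizer.of_conj hG hconj fun k hk => ?_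
  simpa [hinv, Matrix.smul_mul, Matrix.mul_smul] using hconj k hk

theorem vecMul_unipotent10 (a b c d t : ℚ_[p]) :
    ![a, b, c, d] ᵥ* unipotent10 t = ![a + t * b, b, c, d - t * c] := by
  ext i; fin_cases i <;> simp [unipotent10, Matrix.vecMul, dotProduct, Fin.sum_univ_four] <;> ring

theorem vecMul_unipotent21 (a b c d t : ℚ_[p]) :
    ![a, b, c, d] ᵥ* unipotent21 t = ![a + t * d, b + t * c, c, d] := by
  ext i; fin_cases i <;> simp [unipotent21, Matrix.vecMul, dotProduct, Fin.sum_univ_four] <;> ring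

theorem vecMul_unipotent20 (a b c d t : ℚ_[p]) :
    ![a, b, c, d] ᵥ* unipotent20 t = ![a + t * c, b, c, d] := by
  ext i; fin_cases i <;> simp [unipotent20, Matrix.vecMul, dotProduct, Fin.sum_univ_four, mul_comm]

theorem vecMul_unipotent31 (a b c d t : ℚ_[p]) :
    ![a, b, c, d] ᵥ* unipotent31 t = ![a, b + t * d, c, d] := by
  ext i; fin_cases i <;> simp [unipotent31, Matrix.vecMul, dotProduct, Fin.sum_univ_four, mul_comm]

theorem vecMul_weyl02 (a b c d : ℚ_[p]) :
    ![a, b, c, d] ᵥ* weyl02 p = ![-(p * c), b, a / p, d] := by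
  ext i; fin_cases i <;> simp [weyl02, Matrix.vecMul, dotProduct, Fin.sum_univ_four] <;> ring

theorem vecMul_weyl13 (a b c d : ℚ_[p]) :
    ![a, b, c, d] ᵥ* weyl13 p = ![a, -d, c, b] := by
  ext i; fin_cases i <;> simp [weyl13, Matrix.vecMul, dotProduct, Fin.sum_univ_four]

theorem vecMul_atkinLehner (a b c d : ℚ_[p]) :
    ![a, b, c, d] ᵥ* atkinLehner p = ![p * b, a, d, p * c] := by
  ext i; fin_cases i <;> simp [atkinLehner, Matrix.vecMul, dotProduct, Fin.sum_univ_four] <;> ring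

end ExplicitElements

theorem Padic.natCast_mul_norm_le_of_norm_lt {p : ℕ} [Fact p.Prime] {x y : ℚ_[p]}
    (h : ‖x‖ < ‖y‖) : (p : ℝ) * ‖x‖ ≤ ‖y‖ := by
  have hp : (p : ℝ) ≠ 0 := Nat.cast_ne_zero.mpr (Fact.out : p.Prime).ne_zero
  have hy : y ≠ 0 := norm_pos_iff.mp ((norm_nonneg x).trans_lt h)
  rw [Padic.norm_eq_zpow_neg_valuation hy, Padic.norm_lt_pow_iff_norm_le_pow_sub_one] at h
  rw [Padic.norm_eq_zpow_neg_valuation hy]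
  calc (p : ℝ) * ‖x‖ ≤ p * p ^ (-y.valuation - 1) := by gcongr
    _ = p ^ (-y.valuation) := by rw [mul_comm, ← zpow_add_one₀ hp, sub_add_cancel]

section Reduction

variable {p : ℕ} [Fact p.Prime]

theorem exists_mem_KparaNormalizer_vecMul_eq_of_norm_le {a b c d : ℚ_[p]}
    (ha : ‖a‖ ≤ (p : ℝ)⁻¹ * ‖c‖) (hb : ‖b‖ ≤ (p : ℝ)⁻¹ * ‖c‖) (hd : ‖d‖ ≤ (p : ℝ)⁻¹ * ‖c‖) :
    ∃ n ∈ KparaNormalizer p, ![a, b, c, d] ᵥ* n = ![0, 0, c, 0] := by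
  rcases eq_or_ne c 0 with rfl | hc
  · simp only [norm_zero, mul_zero, norm_le_zero_iff] at ha hb hd
    exact ⟨1, KparaNormalizer.one_mem, by simp [ha, hb, hd]⟩
  have hp : (p : ℝ)⁻¹ ≤ 1 :=
    inv_le_one_of_one_le₀ (by exact_mod_cast (Fact.out : p.Prime).one_lt.le)
  have hdiv {x : ℚ_[p]} (hx : ‖x‖ ≤ (p : ℝ)⁻¹ * ‖c‖) : ‖x / c‖ ≤ (p : ℝ)⁻¹ := by
    rwa [norm_div, div_le_iff₀ (norm_pos_iff.mpr hc)]
  set a' := a + d / c * b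
  have ha' : ‖a'‖ ≤ (p : ℝ)⁻¹ * ‖c‖ := by
    refine (Padic.nonarchimedean _ _).trans (max_le ha ?_)
    rw [norm_mul]
    exact (mul_le_of_le_one_left (norm_nonneg b) ((hdiv hd).trans hp)).trans hb
  refine ⟨unipotent10 (d / c) * unipotent21 (-b / c) * unipotent20 (-a' / c),
    KparaNormalizer.mul_mem
      (KparaNormalizer.mul_mem (unipotent10_mem (hdiv hd))
        (unipotent21_mem (hdiv (by rwa [norm_neg]))))
      (unipotent20_mem (hdiv (by rwa [norm_neg]))), ?_⟩
  rw [← Matrix.vecMul_vecMul, ← Matrix.vecMul_vecMul, vecMul_unipotent10, vecMul_unipotent21,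
    vecMul_unipotent20]
  ext i; fin_cases i <;> simp [a'] <;> field_simp <;> ring

theorem exists_mem_KparaNormalizer_vecMul_eq_of_max_le {a b c d : ℚ_[p]}
    (h : max ‖b‖ ‖d‖ ≤ max ‖a‖ ((p : ℝ)⁻¹ * ‖c‖)) :
    ∃ n ∈ KparaNormalizer p, ∃ c', ![a, b, c, d] ᵥ* n = ![0, 0, c', 0] := by
  rcases le_or_gt ‖a‖ ((p : ℝ)⁻¹ * ‖c‖) with hac | hac
  · rw [max_eq_right hac] at h
    obtain ⟨n, hn, hv⟩ := exists_mem_KparaNormalizer_vecMul_eq_of_norm_le hac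
      ((le_max_left _ _).trans h) ((le_max_right _ _).trans h)
    exact ⟨n, hn, c, hv⟩
  · rw [max_eq_left hac.le] at h
    have hpa : (p : ℝ)⁻¹ * ‖a / p‖ = ‖a‖ := by
      have hp : (p : ℝ) ≠ 0 := Nat.cast_ne_zero.mpr (Fact.out : p.Prime).ne_zero
      rw [norm_div, Padic.norm_p, div_inv_eq_mul, mul_comm ‖a‖, inv_mul_cancel_left₀ hp]
    obtain ⟨n, hn, hv⟩ := exists_mem_KparaNormalizer_vecMul_eq_of_norm_le
      (a := -((p : ℚ_[p]) * c)) (b := b) (c := a / p) (d := d)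
      (by rw [hpa, norm_neg, norm_mul, Padic.norm_p]; exact hac.le)
      (hpa ▸ (le_max_left _ _).trans h) (hpa ▸ (le_max_right _ _).trans h)
    exact ⟨weyl02 p * n, KparaNormalizer.mul_mem weyl02_mem hn, a / p,
      by rw [← Matrix.vecMul_vecMul, vecMul_weyl02, hv]⟩

theorem exists_mem_KparaNormalizer_vecMul_eq (v : Fin 4 → ℚ_[p]) :
    ∃ n ∈ KparaNormalizer p, ∃ c, v ᵥ* n = ![0, 0, c, 0] := by
  rw [Matrix.vec_eta_four v]
  set a := v 0; set b := v 1; set c := v 2; set d := v 3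
  rcases le_or_gt (max ‖b‖ ‖d‖) (max ‖a‖ ((p : ℝ)⁻¹ * ‖c‖)) with h | h
  · exact exists_mem_KparaNormalizer_vecMul_eq_of_max_le h
  obtain ⟨y, hy⟩ : ∃ y : ℚ_[p], ‖y‖ = max ‖b‖ ‖d‖ :=
    (max_choice ‖b‖ ‖d‖).elim (fun h => ⟨b, h.symm⟩) fun h => ⟨d, h.symm⟩
  rw [← hy] at h
  have hp : (0 : ℝ) < p := by exact_mod_cast (Fact.out : p.Prime).pos
  have hpy : ‖y / p‖ = p * ‖y‖ := by rw [norm_div, Padic.norm_p, div_inv_eq_mul, mul_comm]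
  have ha : ‖a‖ ≤ (p : ℝ)⁻¹ * ‖y‖ := by
    rw [le_inv_mul_iff₀ hp]
    exact Padic.natCast_mul_norm_le_of_norm_lt ((le_max_left _ _).trans_lt h)
  have hc : ‖c‖ ≤ ‖y‖ := by
    have h' : ‖c‖ < ‖y / p‖ := by
      rw [hpy, ← inv_mul_lt_iff₀ hp]; exact (le_max_right _ _).trans_lt h
    have := Padic.natCast_mul_norm_le_of_norm_lt h'
    rwa [hpy, mul_le_mul_iff_right₀ hp] at this
  obtain ⟨n, hn, c', hv⟩ :=
    exists_mem_KparaNormalizer_vecMul_eq_of_max_le (a := (p : ℚ_[p]) * b) (b := a) (c := d)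
      (d := (p : ℚ_[p]) * c) (by
        rw [norm_mul, norm_mul, Padic.norm_p, ← mul_max_of_nonneg _ _ (by positivity), ← hy]
        exact max_le ha (by gcongr))
  exact ⟨atkinLehner p * n, KparaNormalizer.mul_mem atkinLehner_mem hn, c',
    by rw [← Matrix.vecMul_vecMul, vecMul_atkinLehner, hv]⟩

theorem exists_mem_KparaNormalizer_vecMul_one_eq_zero (w : Fin 4 → ℚ_[p]) :
    ∃ n ∈ KparaNormalizer p, (∀ c, ![0, 0, c, 0] ᵥ* n = ![0, 0, c, 0]) ∧ (w ᵥ* n) 1 = 0 := by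
  rw [Matrix.vec_eta_four w]
  set b := w 1; set d := w 3
  rcases le_or_gt ‖b‖ ‖d‖ with h | h
  · refine ⟨unipotent31 (-b / d), unipotent31_mem ?_, fun c => by simp [vecMul_unipotent31], ?_⟩
    · rw [norm_div, norm_neg]; exact div_le_one_of_le₀ h (norm_nonneg d)
    · rw [vecMul_unipotent31, neg_div, neg_mul,
        div_mul_cancel_of_imp fun hd : d = 0 => by simpa [hd] using h]
      simp
  · have hb : b ≠ 0 := norm_pos_iff.mp ((norm_nonneg d).trans_lt h)
    refine ⟨weyl13 p * unipotent31 (d / b),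
      KparaNormalizer.mul_mem weyl13_mem (unipotent31_mem ?_), fun c => ?_, ?_⟩
    · rw [norm_div]; exact div_le_one_of_le₀ h.le (norm_nonneg b)
    · simp [← Matrix.vecMul_vecMul, vecMul_weyl13, vecMul_unipotent31]
    · simp [← Matrix.vecMul_vecMul, vecMul_weyl13, vecMul_unipotent31, hb]

theorem mem_BorelQp_of_row_two_eq {G : Matrix (Fin 4) (Fin 4) ℚ_[p]} (hG : G ∈ GSp4 p)
    {c : ℚ_[p]} (h2 : G 2 = ![0, 0, c, 0]) (h31 : G 3 1 = 0) : G ∈ BorelQp p := by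
  obtain ⟨hdet, μ, hμ, hJ⟩ := hG
  have hc : c ≠ 0 := by
    rintro rfl
    exact hdet (Matrix.det_eq_zero_of_row_eq_zero 2 fun j => by fin_cases j <;> simp [h2])
  have hrow (j : Fin 4) : (G * J4 p * Gᵀ) 2 j = -c * G j 0 := by
    simp [Matrix.mul_apply, Fin.sum_univ_four, J4, h2]
  have hcol {j : Fin 4} (hj : J4 p 2 j = 0) : G j 0 = 0 := by
    have h := congrFun (congrFun (GSp4.mul_J4_mul_transpose hμ hJ) 2) j
    rw [hrow, Matrix.smul_apply, hj, smul_zero, neg_mul, neg_eq_zero] at h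
    exact (mul_eq_zero.mp h).resolve_left hc
  exact ⟨⟨hdet, μ, hμ, hJ⟩, hcol (by simp [J4]), by simp [h2], hcol (by simp [J4]),
    by simp [h2], h31, by simp [h2]⟩

end Reduction

/-- `GSp₄(ℚ_p) = B(ℚ_p) · 𝒩(𝒦_p)`:  every `g ∈ GSp₄(ℚ_p)` factors as
`g = b·n` with `b` in the Borel subgroup and `n` in the normalizer of the first
paramodular subgroup. -/
theorem stmt_3 (p : ℕ) [Fact p.Prime] (g : Matrix (Fin 4) (Fin 4) ℚ_[p])
    (hg : g ∈ GSp4 p) :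
    ∃ b ∈ BorelQp p, ∃ n ∈ KparaNormalizer p, g = b * n := by
  obtain ⟨n₁, hn₁, c, hc⟩ := exists_mem_KparaNormalizer_vecMul_eq (g 2)
  obtain ⟨n₂, hn₂, hfix, h31⟩ := exists_mem_KparaNormalizer_vecMul_one_eq_zero (g 3 ᵥ* n₁)
  have hn := KparaNormalizer.mul_mem hn₁ hn₂
  refine ⟨g * (n₁ * n₂), mem_BorelQp_of_row_two_eq (GSp4.mul_mem hg hn.1) (c := c) ?_ ?_,
    (n₁ * n₂)⁻¹, KparaNormalizer.inv_mem hn, ?_⟩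
  · rw [Matrix.mul_apply_eq_vecMul, ← Matrix.vecMul_vecMul, hc, hfix]
  · rwa [Matrix.mul_apply_eq_vecMul, ← Matrix.vecMul_vecMul]
  · rw [Matrix.mul_nonsing_inv_cancel_right _ _ (isUnit_iff_ne_zero.mpr hn.1.1)]
end

section
/- Let p be a prime, θ as below, and m ≥ 1 an integer. Let (R, μ) be a σ-finite measure space, f : R → ℂ an integrable function, and g₁, …, g_m : R → ℚ_p measurable functions. Suppose there is a measurable action of the group (ℤ_p^×)^m on R such that: (a) the complex measure f·dμ is invariant under the action, i.e. for every λ ∈ (ℤ_p^×)^m and every bounded measurable h : R → ℂ one has ∫_R h(λ·r)·f(r) dμ(r) = ∫_R h(r)·f(r) dμ(r); and (b) g_j(λ·r) = λ_j·g_j(r) for all λ = (λ₁,…,λ_m) ∈ (ℤ_p^×)^m, all r ∈ R and all 1 ≤ j ≤ m. Then ∫_R f(r)·θ(g₁(r) + ⋯ + g_m(r)) dμ(r) = ∫_{R'} f(r)·θ(g₁(r) + ⋯ + g_m(r)) dμ(r), where R' = { r ∈ R : |g_j(r)| ≤ p for all 1 ≤ j ≤ m }. -/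
/-!
If `‖g_j r‖ = p^(k+2)`, then `x = p^(k+1) g_j r` has `‖x‖ = p`, so `θ x` is a nontrivial `p`-th
root of unity. The units `λ_c = 1 + c p^(k+1)`, `c < p`, placed in the `j`-th coordinate preserve
`f dμ` and every `‖g_i‖`, and multiply `θ(∑ g_i)` by `θ(x)^c`; averaging over `c` shows that the
integral over any invariant set on which `‖g_j‖ = p^(k+2)` vanishes. Cutting away the sets
`{‖g_j‖ > p}` one coordinate at a time leaves `R'`.
-/

open MeasureTheory Finset

section Character

variable {p : ℕ} [Fact p.Prime] {θ : ℚ_[p] → ℂ}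

lemma theta_natCast_mul (hθ_add : ∀ a b : ℚ_[p], θ (a + b) = θ a * θ b) (hθ_zero : θ 0 = 1)
    (c : ℕ) (x : ℚ_[p]) : θ (c * x) = θ x ^ c := by
  induction c with
  | zero => simpa using hθ_zero
  | succ n ih => rw [Nat.cast_succ, add_one_mul, hθ_add, ih, pow_succ]

lemma theta_pow_eq_one (hθ_add : ∀ a b : ℚ_[p], θ (a + b) = θ a * θ b)
    (hθ_triv : ∀ a : ℚ_[p], ‖a‖ ≤ 1 → θ a = 1) {x : ℚ_[p]} (hx : ‖x‖ ≤ p) : θ x ^ p = 1 := by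
  have hp : (0 : ℝ) < p := Nat.cast_pos.mpr (Fact.out : p.Prime).pos
  rw [← theta_natCast_mul hθ_add (hθ_triv 0 (by simp))]
  apply hθ_triv
  rw [norm_mul, Padic.norm_p]
  exact inv_mul_le_one_of_le₀ hx hp.le

/-- Every `a` with `‖a‖ ≤ p` is `n x + y (p x)` with `n : ℕ` and `y ∈ ℤ_p`, so `θ x` determines
`θ` on `p⁻¹ℤ_p`. -/
lemma theta_ne_one_of_norm_eq (hθ_add : ∀ a b : ℚ_[p], θ (a + b) = θ a * θ b)
    (hθ_triv : ∀ a : ℚ_[p], ‖a‖ ≤ 1 → θ a = 1)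
    (hθ_nontriv : ∃ a : ℚ_[p], ‖a‖ ≤ (p : ℝ) ∧ θ a ≠ 1) {x : ℚ_[p]} (hx : ‖x‖ = p) :
    θ x ≠ 1 := by
  have hp : (0 : ℝ) < p := Nat.cast_pos.mpr (Fact.out : p.Prime).pos
  have hx0 : x ≠ 0 := norm_pos_iff.mp (hx ▸ hp)
  intro hθx
  obtain ⟨a, ha, hθa⟩ := hθ_nontriv
  let w : ℤ_[p] := ⟨a / x, by rw [norm_div, hx]; exact div_le_one_of_le₀ ha hp.le⟩
  obtain ⟨n, -, hn⟩ := PadicInt.exists_mem_range w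
  rw [PadicInt.maximalIdeal_eq_span_p, Ideal.mem_span_singleton'] at hn
  obtain ⟨y, hy⟩ := hn
  have ha_eq : a = n * x + y * (p * x) := by
    have : (a / x : ℚ_[p]) = n + y * p := by
      have := congrArg ((↑) : ℤ_[p] → ℚ_[p]) hy
      push_cast at this
      rw [this]; simp [w]
    field_simp at this
    rw [this]; ring
  have hsmall : ‖(y : ℚ_[p]) * (p * x)‖ ≤ 1 := by
    rw [norm_mul, norm_mul, Padic.norm_p, hx, inv_mul_cancel₀ hp.ne', mul_one]
    exact y.norm_le_one
  apply hθa
  rw [ha_eq, hθ_add, theta_natCast_mul hθ_add (hθ_triv 0 (by simp)), hθx, one_pow, one_mul,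
    hθ_triv _ hsmall]

lemma geom_sum_theta_eq_zero (hθ_add : ∀ a b : ℚ_[p], θ (a + b) = θ a * θ b)
    (hθ_triv : ∀ a : ℚ_[p], ‖a‖ ≤ 1 → θ a = 1)
    (hθ_nontriv : ∃ a : ℚ_[p], ‖a‖ ≤ (p : ℝ) ∧ θ a ≠ 1) {x : ℚ_[p]} (hx : ‖x‖ = p) :
    ∑ c ∈ range p, θ x ^ c = 0 := by
  rw [geom_sum_eq (theta_ne_one_of_norm_eq hθ_add hθ_triv hθ_nontriv hx),
    theta_pow_eq_one hθ_add hθ_triv hx.le, sub_self, zero_div]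

end Character

namespace Padic

variable {p : ℕ} [Fact p.Prime]

lemma natCast_lt_norm_iff {x : ℚ_[p]} : (p : ℝ) < ‖x‖ ↔ ∃ k : ℕ, ‖x‖ = (p : ℝ) ^ (k + 2) := by
  have hp : (1 : ℝ) < p := Nat.one_lt_cast.mpr (Fact.out : p.Prime).one_lt
  constructor
  · intro hx
    have hx0 : x ≠ 0 := norm_pos_iff.mp ((zero_lt_one.trans hp).trans hx)
    rw [norm_eq_zpow_neg_valuation hx0] at hx ⊢
    have h2 : 2 ≤ -x.valuation := by
      by_contra! h
      have := zpow_le_zpow_right₀ hp.le (show -x.valuation ≤ 1 by omega)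
      rw [zpow_one] at this
      linarith
    refine ⟨(-x.valuation - 2).toNat, ?_⟩
    rw [← zpow_natCast]
    congr 1
    omega
  · rintro ⟨k, hk⟩
    rw [hk]
    exact lt_self_pow₀ hp (by omega)

end Padic

lemma PadicInt.exists_unit_coe_eq_one_add_mul_pow {p : ℕ} [Fact p.Prime] (c k : ℕ) :
    ∃ u : ℤ_[p]ˣ, ((u : ℤ_[p]) : ℚ_[p]) = 1 + c * p ^ (k + 1) := by
  have hnonunit : -((c : ℤ_[p]) * p ^ (k + 1)) ∈ nonunits ℤ_[p] := by
    rw [PadicInt.mem_nonunits, norm_neg, PadicInt.norm_lt_one_iff_dvd]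
    exact Dvd.dvd.mul_left (dvd_pow_self _ (by omega)) _
  obtain ⟨u, hu⟩ := IsLocalRing.isUnit_one_sub_self_of_mem_nonunits _ hnonunit
  exact ⟨u, by rw [hu]; push_cast; ring⟩

lemma integral_mul_eq_zero_of_sum_comp_eq_zero {𝕜 R ι : Type*} [RCLike 𝕜] [MeasurableSpace R]
    {μ : Measure R} {f h : R → 𝕜} {s : Finset ι} (hs : s.Nonempty) {φ : ι → R → R}
    (hint : ∀ i ∈ s, Integrable (fun r => h (φ i r) * f r) μ)
    (hinv : ∀ i ∈ s, ∫ r, h (φ i r) * f r ∂μ = ∫ r, h r * f r ∂μ)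
    (hsum : ∀ r, ∑ i ∈ s, h (φ i r) = 0) :
    ∫ r, h r * f r ∂μ = 0 := by
  have : (#s : 𝕜) * ∫ r, h r * f r ∂μ = 0 := by
    calc (#s : 𝕜) * ∫ r, h r * f r ∂μ = ∑ i ∈ s, ∫ r, h (φ i r) * f r ∂μ := by
          rw [sum_congr rfl hinv, sum_const, nsmul_eq_mul]
      _ = ∫ r, (∑ i ∈ s, h (φ i r)) * f r ∂μ := by
          rw [← integral_finsetSum _ hint]; simp only [sum_mul]
      _ = 0 := by simp only [hsum, zero_mul, integral_zero]
  exact (mul_eq_zero.mp this).resolve_left (Nat.cast_ne_zero.mpr hs.card_pos.ne')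

section Action

variable {p : ℕ} [Fact p.Prime] {m : ℕ} {R : Type*} {g : Fin m → R → ℚ_[p]}
  {act : (Fin m → ℤ_[p]ˣ) → R → R}

lemma norm_apply_act (h_equiv : ∀ (lam : Fin m → ℤ_[p]ˣ) (r : R) (j : Fin m),
      g j (act lam r) = ((lam j : ℤ_[p]) : ℚ_[p]) * g j r) (lam : Fin m → ℤ_[p]ˣ) (r : R)
    (j : Fin m) : ‖g j (act lam r)‖ = ‖g j r‖ := by
  rw [h_equiv, norm_mul, PadicInt.padic_norm_e_of_padicInt, PadicInt.norm_units, one_mul]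

lemma sum_apply_act_mulSingle (h_equiv : ∀ (lam : Fin m → ℤ_[p]ˣ) (r : R) (j : Fin m),
      g j (act lam r) = ((lam j : ℤ_[p]) : ℚ_[p]) * g j r) (j : Fin m) (u : ℤ_[p]ˣ) (r : R) :
    ∑ i, g i (act (Pi.mulSingle j u) r) = ∑ i, g i r + (((u : ℤ_[p]) : ℚ_[p]) - 1) * g j r := by
  have hdiff : ∀ i, g i (act (Pi.mulSingle j u) r) - g i r
      = (Pi.single j (((u : ℤ_[p]) : ℚ_[p]) - 1) : Fin m → ℚ_[p]) i * g i r := by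
    intro i
    rw [h_equiv]
    rcases eq_or_ne i j with rfl | hij
    · simp only [Pi.mulSingle_eq_same, Pi.single_eq_same]; ring
    · simp [Pi.mulSingle_eq_of_ne hij, Pi.single_eq_of_ne hij]
  rw [← sub_eq_iff_eq_add', ← sum_sub_distrib, sum_congr rfl fun i _ => hdiff i]
  simp [Pi.single_apply]

end Action

section Averaging

variable {p : ℕ} [Fact p.Prime] [MeasurableSpace ℚ_[p]] [BorelSpace ℚ_[p]] {θ : ℚ_[p] → ℂ}
  {m : ℕ} {R : Type*} [MeasurableSpace R] {μ : Measure R} {f : R → ℂ} {g : Fin m → R → ℚ_[p]}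
  {act : (Fin m → ℤ_[p]ˣ) → R → R}

lemma integrable_mul_theta_sum (hθ_cont : Continuous θ) (hθ_unit : ∀ a : ℚ_[p], ‖θ a‖ = 1)
    (hf : Integrable f μ) (hg : ∀ j, Measurable (g j)) :
    Integrable (fun r => f r * θ (∑ i, g i r)) μ :=
  hf.mul_bdd
    (hθ_cont.measurable.comp (Finset.measurable_sum _ fun i _ => hg i)).aestronglyMeasurable
    (Filter.Eventually.of_forall fun _ => (hθ_unit _).le)

lemma setIntegral_mul_theta_eq_zero_of_norm_eq_pow (hθ_cont : Continuous θ)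
    (hθ_add : ∀ a b : ℚ_[p], θ (a + b) = θ a * θ b)
    (hθ_unit : ∀ a : ℚ_[p], ‖θ a‖ = 1)
    (hθ_triv : ∀ a : ℚ_[p], ‖a‖ ≤ 1 → θ a = 1)
    (hθ_nontriv : ∃ a : ℚ_[p], ‖a‖ ≤ (p : ℝ) ∧ θ a ≠ 1)
    (hf : Integrable f μ) (hg : ∀ j, Measurable (g j)) (act_meas : ∀ lam, Measurable (act lam))
    (h_inv : ∀ (lam : Fin m → ℤ_[p]ˣ) (h : R → ℂ), Measurable h → (∃ C : ℝ, ∀ r, ‖h r‖ ≤ C) →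
      ∫ r, h (act lam r) * f r ∂μ = ∫ r, h r * f r ∂μ)
    (h_equiv : ∀ (lam : Fin m → ℤ_[p]ˣ) (r : R) (j : Fin m),
      g j (act lam r) = ((lam j : ℤ_[p]) : ℚ_[p]) * g j r)
    {T : Set R} (hT : MeasurableSet T) (hT_inv : ∀ lam r, act lam r ∈ T ↔ r ∈ T)
    (j : Fin m) (k : ℕ) (hTj : ∀ r ∈ T, ‖g j r‖ = (p : ℝ) ^ (k + 2)) :
    ∫ r in T, f r * θ (∑ i, g i r) ∂μ = 0 := by
  choose u hu using fun c : ℕ => PadicInt.exists_unit_coe_eq_one_add_mul_pow (p := p) c k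
  set h : R → ℂ := T.indicator fun r => θ (∑ i, g i r)
  have h_meas : Measurable h :=
    (hθ_cont.measurable.comp (Finset.measurable_sum _ fun i _ => hg i)).indicator hT
  have h_bdd : ∀ r, ‖h r‖ ≤ 1 := fun r =>
    (norm_indicator_le_norm_self _ r).trans (hθ_unit _).le
  have h_act : ∀ c r, h (act (Pi.mulSingle j (u c)) r) = θ (p ^ (k + 1) * g j r) ^ c * h r := by
    intro c r
    simp only [h]
    by_cases hr : r ∈ T
    · rw [Set.indicator_of_mem ((hT_inv _ r).mpr hr), Set.indicator_of_mem hr,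
        sum_apply_act_mulSingle h_equiv, hu, hθ_add, add_sub_cancel_left, mul_assoc,
        theta_natCast_mul hθ_add (hθ_triv 0 (by simp)), mul_comm]
    · rw [Set.indicator_of_notMem (mt (hT_inv _ r).mp hr), Set.indicator_of_notMem hr, mul_zero]
  have h_sum : ∀ r, ∑ c ∈ range p, h (act (Pi.mulSingle j (u c)) r) = 0 := by
    intro r
    rw [sum_congr rfl fun c _ => h_act c r, ← sum_mul]
    by_cases hr : r ∈ T
    · have hp : (p : ℝ) ≠ 0 := Nat.cast_ne_zero.mpr (Fact.out : p.Prime).ne_zero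
      have hnorm : ‖(p : ℚ_[p]) ^ (k + 1) * g j r‖ = p := by
        rw [norm_mul, Padic.norm_p_pow, hTj r hr, zpow_neg, zpow_natCast, pow_succ _ (k + 1),
          inv_mul_cancel_left₀ (pow_ne_zero _ hp)]
      rw [geom_sum_theta_eq_zero hθ_add hθ_triv hθ_nontriv hnorm, zero_mul]
    · rw [show h r = 0 from Set.indicator_of_notMem hr _, mul_zero]
  have h_int : ∀ lam, Integrable (fun r => h (act lam r) * f r) μ := fun lam =>
    hf.bdd_mul (h_meas.comp (act_meas lam)).aestronglyMeasurable
      (Filter.Eventually.of_forall fun _ => h_bdd _)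
  rw [← integral_indicator hT]
  calc ∫ r, T.indicator (fun r => f r * θ (∑ i, g i r)) r ∂μ = ∫ r, h r * f r ∂μ := by
        congr 1; ext r; by_cases hr : r ∈ T <;> simp [h, hr, mul_comm]
    _ = 0 := integral_mul_eq_zero_of_sum_comp_eq_zero
        ⟨0, mem_range.mpr (Fact.out : p.Prime).pos⟩ (fun _ _ => h_int _)
        (fun _ _ => h_inv _ h h_meas ⟨1, h_bdd⟩) h_sum

lemma setIntegral_sdiff_norm_le_eq_zero (hθ_cont : Continuous θ)
    (hθ_add : ∀ a b : ℚ_[p], θ (a + b) = θ a * θ b)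
    (hθ_unit : ∀ a : ℚ_[p], ‖θ a‖ = 1)
    (hθ_triv : ∀ a : ℚ_[p], ‖a‖ ≤ 1 → θ a = 1)
    (hθ_nontriv : ∃ a : ℚ_[p], ‖a‖ ≤ (p : ℝ) ∧ θ a ≠ 1)
    (hf : Integrable f μ) (hg : ∀ j, Measurable (g j)) (act_meas : ∀ lam, Measurable (act lam))
    (h_inv : ∀ (lam : Fin m → ℤ_[p]ˣ) (h : R → ℂ), Measurable h → (∃ C : ℝ, ∀ r, ‖h r‖ ≤ C) →
      ∫ r, h (act lam r) * f r ∂μ = ∫ r, h r * f r ∂μ)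
    (h_equiv : ∀ (lam : Fin m → ℤ_[p]ˣ) (r : R) (j : Fin m),
      g j (act lam r) = ((lam j : ℤ_[p]) : ℚ_[p]) * g j r)
    {T : Set R} (hT : MeasurableSet T) (hT_inv : ∀ lam r, act lam r ∈ T ↔ r ∈ T) (j : Fin m) :
    ∫ r in T \ {r | ‖g j r‖ ≤ p}, f r * θ (∑ i, g i r) ∂μ = 0 := by
  set A : ℕ → Set R := fun k => T ∩ {r | ‖g j r‖ = (p : ℝ) ^ (k + 2)}
  have hcover : T \ {r | ‖g j r‖ ≤ p} = ⋃ k, A k := by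
    ext r
    simp only [A, Set.mem_sdiff, Set.mem_ofPred_eq, not_le, Padic.natCast_lt_norm_iff,
      Set.mem_iUnion, Set.mem_inter_iff, exists_and_left]
  have hA_meas : ∀ k, MeasurableSet (A k) := fun k =>
    hT.inter ((hg j).norm (measurableSet_singleton _))
  have hA_disj : Pairwise (Function.onFun Disjoint A) := by
    intro k l hkl
    refine Set.disjoint_left.mpr fun r hk hl => hkl ?_
    have hp : (1 : ℝ) < p := Nat.one_lt_cast.mpr (Fact.out : p.Prime).one_lt
    simpa using pow_right_injective₀ (zero_lt_one.trans hp) hp.ne' (hk.2.symm.trans hl.2)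
  have hA_zero : ∀ k, ∫ r in A k, f r * θ (∑ i, g i r) ∂μ = 0 := fun k =>
    setIntegral_mul_theta_eq_zero_of_norm_eq_pow hθ_cont hθ_add hθ_unit hθ_triv hθ_nontriv hf hg
      act_meas h_inv h_equiv (hA_meas k)
      (fun lam r => by simp only [A, Set.mem_inter_iff, hT_inv, Set.mem_ofPred_eq,
        norm_apply_act h_equiv])
      j k fun r hr => hr.2
  rw [hcover, integral_iUnion hA_meas hA_disj
    (integrable_mul_theta_sum hθ_cont hθ_unit hf hg).integrableOn]
  simp only [hA_zero, tsum_zero]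

lemma integral_mul_theta_eq_setIntegral_norm_le (hθ_cont : Continuous θ)
    (hθ_add : ∀ a b : ℚ_[p], θ (a + b) = θ a * θ b)
    (hθ_unit : ∀ a : ℚ_[p], ‖θ a‖ = 1)
    (hθ_triv : ∀ a : ℚ_[p], ‖a‖ ≤ 1 → θ a = 1)
    (hθ_nontriv : ∃ a : ℚ_[p], ‖a‖ ≤ (p : ℝ) ∧ θ a ≠ 1)
    (hf : Integrable f μ) (hg : ∀ j, Measurable (g j)) (act_meas : ∀ lam, Measurable (act lam))
    (h_inv : ∀ (lam : Fin m → ℤ_[p]ˣ) (h : R → ℂ), Measurable h → (∃ C : ℝ, ∀ r, ‖h r‖ ≤ C) →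
      ∫ r, h (act lam r) * f r ∂μ = ∫ r, h r * f r ∂μ)
    (h_equiv : ∀ (lam : Fin m → ℤ_[p]ˣ) (r : R) (j : Fin m),
      g j (act lam r) = ((lam j : ℤ_[p]) : ℚ_[p]) * g j r)
    (s : Finset (Fin m)) :
    ∫ r, f r * θ (∑ i, g i r) ∂μ =
      ∫ r in {r | ∀ j ∈ s, ‖g j r‖ ≤ p}, f r * θ (∑ i, g i r) ∂μ := by
  induction s using Finset.induction_on with
  | empty => simp
  | insert j s _ ih =>
    have hset : {r | ∀ i ∈ insert j s, ‖g i r‖ ≤ p}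
        = {r | ∀ i ∈ s, ‖g i r‖ ≤ p} ∩ {r | ‖g j r‖ ≤ p} := by
      ext r; simp [and_comm]
    have hT : MeasurableSet {r | ∀ i ∈ s, ‖g i r‖ ≤ p} := by
      simp only [Set.ofPred_forall]
      exact MeasurableSet.biInter s.countable_toSet fun i _ =>
        measurableSet_le (hg i).norm measurable_const
    rw [ih, hset, ← integral_inter_add_sdiff (measurableSet_le (hg j).norm measurable_const)
      (integrable_mul_theta_sum hθ_cont hθ_unit hf hg).integrableOn,
      setIntegral_sdiff_norm_le_eq_zero hθ_cont hθ_add hθ_unit hθ_triv hθ_nontriv hf hg act_meas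
        h_inv h_equiv hT (fun lam r => by simp only [Set.mem_ofPred_eq, norm_apply_act h_equiv]),
      add_zero]

end Averaging

theorem stmt_4_general (p : ℕ) [Fact p.Prime]
    [MeasurableSpace ℚ_[p]] [BorelSpace ℚ_[p]]
    (θ : ℚ_[p] → ℂ) (hθ_cont : Continuous θ)
    (hθ_add : ∀ a b : ℚ_[p], θ (a + b) = θ a * θ b)
    (hθ_unit : ∀ a : ℚ_[p], ‖θ a‖ = 1)
    (hθ_triv : ∀ a : ℚ_[p], ‖a‖ ≤ 1 → θ a = 1)
    (hθ_nontriv : ∃ a : ℚ_[p], ‖a‖ ≤ (p : ℝ) ∧ θ a ≠ 1)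
    (m : ℕ)
    {R : Type*} [MeasurableSpace R] (μ : Measure R)
    (f : R → ℂ) (hf : Integrable f μ)
    (g : Fin m → R → ℚ_[p]) (hg : ∀ j, Measurable (g j))
    (act : (Fin m → ℤ_[p]ˣ) → R → R)
    (act_meas : ∀ lam, Measurable (act lam))
    (h_inv : ∀ (lam : Fin m → ℤ_[p]ˣ) (h : R → ℂ), Measurable h → (∃ C : ℝ, ∀ r, ‖h r‖ ≤ C) →
      ∫ r, h (act lam r) * f r ∂μ = ∫ r, h r * f r ∂μ)
    (h_equiv : ∀ (lam : Fin m → ℤ_[p]ˣ) (r : R) (j : Fin m),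
      g j (act lam r) = ((lam j : ℤ_[p]) : ℚ_[p]) * g j r) :
    ∫ r, f r * θ (∑ j, g j r) ∂μ =
      ∫ r in {r : R | ∀ j, ‖g j r‖ ≤ (p : ℝ)}, f r * θ (∑ j, g j r) ∂μ := by
  simpa using integral_mul_theta_eq_setIntegral_norm_le hθ_cont hθ_add hθ_unit hθ_triv hθ_nontriv
    hf hg act_meas h_inv h_equiv Finset.univ

/-- Let `p` be a prime, `θ : ℚ_p → ℂ` a continuous unitary additive
character trivial on `ℤ_p` and nontrivial on `p⁻¹ℤ_p`, and `m ≥ 1`.  Let `(R, μ)` be a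
σ-finite measure space, `f : R → ℂ` integrable, `g₁, …, g_m : R → ℚ_p` measurable.
Suppose `(ℤ_p^×)^m` acts measurably on `R`, leaving `f·dμ` invariant, and
`g_j(λ·r) = λ_j · g_j(r)`.  Then
`∫_R f·θ(∑ g_j) dμ = ∫_{R'} f·θ(∑ g_j) dμ` where `R' = {r : |g_j(r)| ≤ p ∀ j}`. -/
theorem stmt_4 (p : ℕ) [Fact p.Prime]
    [MeasurableSpace ℚ_[p]] [BorelSpace ℚ_[p]]
    (θ : ℚ_[p] → ℂ) (hθ_cont : Continuous θ)
    (hθ_add : ∀ a b : ℚ_[p], θ (a + b) = θ a * θ b)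
    (hθ_unit : ∀ a : ℚ_[p], ‖θ a‖ = 1)
    (hθ_triv : ∀ a : ℚ_[p], ‖a‖ ≤ 1 → θ a = 1)
    (hθ_nontriv : ∃ a : ℚ_[p], ‖a‖ ≤ (p : ℝ) ∧ θ a ≠ 1)
    (m : ℕ) (hm : 1 ≤ m)
    {R : Type*} [MeasurableSpace R] (μ : Measure R) [SigmaFinite μ]
    (f : R → ℂ) (hf : Integrable f μ)
    (g : Fin m → R → ℚ_[p]) (hg : ∀ j, Measurable (g j))
    (act : (Fin m → ℤ_[p]ˣ) → R → R)
    (act_one : ∀ r, act 1 r = r)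
    (act_mul : ∀ lam lam' r, act (lam * lam') r = act lam (act lam' r))
    (act_meas : ∀ lam, Measurable (act lam))
    (h_inv : ∀ (lam : Fin m → ℤ_[p]ˣ) (h : R → ℂ), Measurable h → (∃ C : ℝ, ∀ r, ‖h r‖ ≤ C) →
      ∫ r, h (act lam r) * f r ∂μ = ∫ r, h r * f r ∂μ)
    (h_equiv : ∀ (lam : Fin m → ℤ_[p]ˣ) (r : R) (j : Fin m),
      g j (act lam r) = ((lam j : ℤ_[p]) : ℚ_[p]) * g j r) :
    ∫ r, f r * θ (∑ j, g j r) ∂μ =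
      ∫ r in {r : R | ∀ j, ‖g j r‖ ≤ (p : ℝ)}, f r * θ (∑ j, g j r) ∂μ :=
  stmt_4_general p θ hθ_cont hθ_add hθ_unit hθ_triv hθ_nontriv m μ f hf g hg act act_meas h_inv
    h_equiv
end
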